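/- Let f : ∂X → ℝ be non-negative and bounded by M, f̃ its extension by 0, and h(x) = lim_{k→∞} ω_x^k(f̃). Then h is harmonic on X: h(x) = ∑_ζ λ(x,ζ) h(ζ) for every x ∈ X. -/
import Mathlib


open Filter Topology

open Classical in
noncomputable def dpow {X : Type*} (w : X → X → ℝ) : ℕ → X → X → ℝ
  | 0 => fun x y => if x = y then 1 else 0
  | k + 1 => fun x y => ∑ᶠ ζ, w x ζ * dpow w k ζ y

lemma dpow_support_finite {X : Type*} (w : X → X → ℝ)
    (hfin : ∀ x, (Function.support (w x)).Finite) :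
    ∀ k x, (Function.support (dpow w k x)).Finite := by
  intro k
  induction k with
  | zero =>
    intro x
    apply Set.Finite.subset (Set.finite_singleton x)
    intro y hy
    simp only [dpow, Function.mem_support] at hy
    by_contra hne
    exact hy (if_neg (fun hxy => hne (by simp [hxy])))
  | succ k ih =>
    intro x
    apply Set.Finite.subset ((hfin x).biUnion (fun η _ => ih η))
    intro y hy
    simp only [dpow, Function.mem_support] at hy
    have : ∃ η, w x η * dpow w k η y ≠ 0 := by
      by_contra hc
      push_neg at hc
      exact hy (by simp [finsum_eq_zero_of_forall_eq_zero hc])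
    obtain ⟨η, hη⟩ := this
    exact Set.mem_biUnion (left_ne_zero_of_mul hη) (right_ne_zero_of_mul hη)

/-- the limit function h is harmonic. -/
theorem stmt_13 {X : Type*} [Countable X] (w : X → X → ℝ)
    (hnn : ∀ x y, 0 ≤ w x y) (hfin : ∀ x, (Function.support (w x)).Finite)
    (hrow : ∀ x, ∑ᶠ y, w x y = 1)
    (f : X → ℝ) (hf0 : ∀ x, w x x = 1 → 0 ≤ f x)
    (M : ℝ) (hfb : ∀ x, w x x = 1 → f x ≤ M)
    (h : X → ℝ)
    (hlim : ∀ x : X,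
      Tendsto (fun k => ∑ᶠ ζ, dpow w k x ζ * (if w ζ ζ = 1 then f ζ else 0))
        atTop (𝓝 (h x))) :
    ∀ x, h x = ∑ᶠ ζ, w x ζ * h ζ := by
  classical
  intro x
  set g : X → ℝ := fun ζ => if w ζ ζ = 1 then f ζ else 0 with hg
  have dfin := dpow_support_finite w hfin
  set S : Finset X := (hfin x).toFinset with hS
  -- key recursion
  have key : ∀ k, (∑ᶠ ζ, dpow w (k+1) x ζ * g ζ)
      = ∑ η ∈ S, w x η * ∑ᶠ ζ, dpow w k η ζ * g ζ := by
    intro k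
    set T : Finset X := S.biUnion (fun η => (dfin k η).toFinset) with hT
    have hsub : ∀ η ∈ S, Function.support (fun ζ => dpow w k η ζ * g ζ) ⊆ ↑T := by
      intro η hη ζ hζ
      have : dpow w k η ζ ≠ 0 := left_ne_zero_of_mul hζ
      exact Finset.mem_coe.mpr (Finset.mem_biUnion.mpr ⟨η, hη, (dfin k η).mem_toFinset.mpr this⟩)
    have h1 : (∑ᶠ ζ, dpow w (k+1) x ζ * g ζ) = ∑ ζ ∈ T, dpow w (k+1) x ζ * g ζ := by
      apply finsum_eq_finset_sum_of_support_subset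
      intro ζ hζ
      have hd : dpow w (k+1) x ζ ≠ 0 := left_ne_zero_of_mul hζ
      simp only [dpow] at hd
      have : ∃ η, w x η * dpow w k η ζ ≠ 0 := by
        by_contra hc
        push_neg at hc
        exact hd (by simp [finsum_eq_zero_of_forall_eq_zero hc])
      obtain ⟨η, hη⟩ := this
      refine Finset.mem_coe.mpr (Finset.mem_biUnion.mpr ⟨η, ?_, ?_⟩)
      · exact (hfin x).mem_toFinset.mpr (left_ne_zero_of_mul hη)
      · exact (dfin k η).mem_toFinset.mpr (right_ne_zero_of_mul hη)
    have h2 : ∀ ζ, dpow w (k+1) x ζ = ∑ η ∈ S, w x η * dpow w k η ζ := by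
      intro ζ
      show (∑ᶠ η, w x η * dpow w k η ζ) = _
      apply finsum_eq_finset_sum_of_support_subset
      intro η hη
      exact Finset.mem_coe.mpr ((hfin x).mem_toFinset.mpr (left_ne_zero_of_mul hη))
    calc (∑ᶠ ζ, dpow w (k+1) x ζ * g ζ)
        = ∑ ζ ∈ T, (∑ η ∈ S, w x η * dpow w k η ζ) * g ζ := by
          rw [h1]; exact Finset.sum_congr rfl fun ζ _ => by rw [h2]
      _ = ∑ ζ ∈ T, ∑ η ∈ S, w x η * dpow w k η ζ * g ζ := by
          exact Finset.sum_congr rfl fun ζ _ => Finset.sum_mul _ _ _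
      _ = ∑ η ∈ S, ∑ ζ ∈ T, w x η * dpow w k η ζ * g ζ := Finset.sum_comm
      _ = ∑ η ∈ S, w x η * ∑ ζ ∈ T, dpow w k η ζ * g ζ := by
          exact Finset.sum_congr rfl fun η _ => by
            rw [Finset.mul_sum]; exact Finset.sum_congr rfl fun ζ _ => (mul_assoc _ _ _)
      _ = ∑ η ∈ S, w x η * ∑ᶠ ζ, dpow w k η ζ * g ζ := by
          refine Finset.sum_congr rfl fun η hη => ?_
          rw [finsum_eq_finset_sum_of_support_subset _ (hsub η hη)]
  -- limits
  have lim1 : Tendsto (fun k => ∑ᶠ ζ, dpow w (k+1) x ζ * g ζ) atTop (𝓝 (h x)) :=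
    (hlim x).comp (tendsto_add_atTop_nat 1)
  have lim2 : Tendsto (fun k => ∑ η ∈ S, w x η * ∑ᶠ ζ, dpow w k η ζ * g ζ) atTop
      (𝓝 (∑ η ∈ S, w x η * h η)) :=
    tendsto_finset_sum _ fun η _ => (hlim η).const_mul _
  have heq : (∑ η ∈ S, w x η * h η) = ∑ᶠ ζ, w x ζ * h ζ := by
    symm
    apply finsum_eq_finset_sum_of_support_subset
    intro η hη
    exact Finset.mem_coe.mpr ((hfin x).mem_toFinset.mpr (left_ne_zero_of_mul hη))
  rw [← heq]
  exact tendsto_nhds_unique lim1 (lim2.congr fun k => (key k).symm)
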